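/- For the PMPC counterexample with N* ≥ 2: define closed-loop execution where at each time the controller replans with consensus horizon K and executes the first planned action. If K ≥ N* (measuring consensus from the current time), the closed-loop trajectory under either true disturbance w₁ or w₂ remains in state 0 forever. If instead the plan is allowed to tailor actions to each particle after only K < N* steps, then there exists a plan that is optimal for each particle individually whose first action is u^(0) = 1, and executing such first actions leads the closed-loop state to 2 under at least one true disturbance. -/

import Mathlib

open scoped ENNReal

/-- Dynamics of the PMPC counterexample: state in {0,1,2}, action and
disturbance in Bool (`false` = 0, `true` = 1); state 2 is absorbing. -/
def pmpcDyn (x : ℕ) (u w : Bool) : ℕ :=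
  if x = 0 then (if u then 1 else 0)
  else if x = 1 then (if u = w then 1 else 2)
  else 2

/-- Trajectory from initial state `x` under controls `u` and disturbances `w`. -/
def trajFrom (x : ℕ) (u w : ℕ → Bool) : ℕ → ℕ
  | 0 => x
  | j + 1 => pmpcDyn (trajFrom x u w j) (u j) (w j)

/-- Stage cost: c(0) = 1, c(1) = 0, c(2) = ∞. -/
noncomputable def pmpcCost (x : ℕ) : ℝ≥0∞ := if x = 0 then 1 else if x = 1 then 0 else ⊤

/-- Cost over planning horizon `N` of the open-loop plan `u` starting from state `x`
under disturbance sequence `w`. -/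
noncomputable def planCost (x : ℕ) (w u : ℕ → Bool) (N : ℕ) : ℝ≥0∞ :=
  ∑ j ∈ Finset.range (N + 1), pmpcCost (trajFrom x u w j)

/-- First disturbance realization: 0 before step `Nstar`, parity of `j` afterwards. -/
def w₁ (Nstar : ℕ) (j : ℕ) : Bool := if j < Nstar then false else decide (j % 2 = 1)

/-- Second disturbance realization: 0 before step `Nstar`, opposite parity afterwards. -/
def w₂ (Nstar : ℕ) (j : ℕ) : Bool := if j < Nstar then false else decide ((j + 1) % 2 = 1)

/-- Closed-loop trajectory from state 0 under a (time, state)-feedback policy `π`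
and true disturbance `w`. -/
def closedLoop (π : ℕ → ℕ → Bool) (w : ℕ → Bool) : ℕ → ℕ
  | 0 => 0
  | t + 1 => pmpcDyn (closedLoop π w t) (π t (closedLoop π w t)) (w t)


/-!
From state 0 the action 1 leads to state 1, where the state survives (stays 1, cost 0)
exactly as long as each action copies the current disturbance; one mismatch sends it to the
absorbing state 2 of infinite cost. Since `w₁` and `w₂` differ at every step from `N*` on, one
action sequence cannot copy both there. Hence a plan that starts with 1 and keeps a common
action at some step where the (shifted) disturbances differ has infinite cost for one of
them, while always playing 0 has finite cost: with consensus up to `K ≥ N*` every optimal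
plan starts with 0, and the closed loop never leaves 0. With `K < N*` the two particles need
no common action after the disturbances split, so playing 1 and then copying each particle's
disturbance achieves the least possible cost 1 for each; but executing a first action 1
against the true disturbance reaches state 2 at step `N* + 1` for one of the two.
-/

lemma trajFrom_succ' (x : ℕ) (u w : ℕ → Bool) (j : ℕ) :
    trajFrom x u w (j + 1) =
      trajFrom (pmpcDyn x (u 0) (w 0)) (fun i => u (i + 1)) (fun i => w (i + 1)) j := by
  induction j with
  | zero => rfl
  | succ j ih => rw [trajFrom, ih]; rfl

lemma trajFrom_one (u w : ℕ → Bool) (n : ℕ) :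
    trajFrom 1 u w n = if ∀ i < n, u i = w i then 1 else 2 := by
  induction n with
  | zero => simp [trajFrom]
  | succ n ih =>
    rw [trajFrom, ih]
    simp only [Nat.forall_lt_succ_right]
    by_cases h : ∀ i < n, u i = w i
    · by_cases hn : u n = w n
      · rw [if_pos h, if_pos ⟨h, hn⟩]
        simp [pmpcDyn, hn]
      · rw [if_pos h, if_neg fun h' => hn h'.2]
        simp [pmpcDyn, hn]
    · rw [if_neg h, if_neg fun h' => h h'.1]
      rfl

lemma trajFrom_zero_succ_of_head_eq_true {u : ℕ → Bool} (w : ℕ → Bool) (hu : u 0 = true)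
    (n : ℕ) :
    trajFrom 0 u w (n + 1) = if ∀ i < n, u (i + 1) = w (i + 1) then 1 else 2 := by
  rw [trajFrom_succ', hu]
  exact trajFrom_one _ _ n

lemma trajFrom_zero_eq_two_of_ne {u₁ u₂ w w' : ℕ → Bool} {j : ℕ} (h₁ : u₁ 0 = true)
    (h₂ : u₂ 0 = true) (hj : 0 < j) (hu : u₁ j = u₂ j) (hw : w j ≠ w' j) :
    trajFrom 0 u₁ w (j + 1) = 2 ∨ trajFrom 0 u₂ w' (j + 1) = 2 := by
  obtain ⟨i, rfl⟩ : ∃ i, j = i + 1 := ⟨j - 1, by omega⟩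
  rw [trajFrom_zero_succ_of_head_eq_true w h₁, trajFrom_zero_succ_of_head_eq_true w' h₂]
  split_ifs with hw₁ hw₂ <;> simp
  exact hw (by rw [← hw₁ i (by omega), hu, hw₂ i (by omega)])

lemma planCost_eq_top_of_trajFrom_eq_two {x N j : ℕ} {w u : ℕ → Bool} (hj : j ≤ N)
    (h : trajFrom x u w j = 2) : planCost x w u N = ⊤ :=
  ENNReal.sum_eq_top.2 ⟨j, Finset.mem_range.2 (by omega), by simp [h, pmpcCost]⟩

lemma trajFrom_zero_const_false (w : ℕ → Bool) (j : ℕ) :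
    trajFrom 0 (fun _ => false) w j = 0 := by
  induction j with
  | zero => rfl
  | succ j ih => simp [trajFrom, ih, pmpcDyn]

lemma planCost_zero_const_false_ne_top (w : ℕ → Bool) (N : ℕ) :
    planCost 0 w (fun _ => false) N ≠ ⊤ :=
  ENNReal.sum_ne_top.2 fun j _ => by simp [trajFrom_zero_const_false, pmpcCost]

lemma one_le_planCost_zero (w u : ℕ → Bool) (N : ℕ) : 1 ≤ planCost 0 w u N :=
  calc (1 : ℝ≥0∞) = pmpcCost (trajFrom 0 u w 0) := by simp [trajFrom, pmpcCost]
    _ ≤ planCost 0 w u N :=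
      Finset.single_le_sum (f := fun j => pmpcCost (trajFrom 0 u w j)) (fun _ _ => zero_le)
        (Finset.mem_range.2 N.succ_pos)

def trackingPlan (w : ℕ → Bool) (j : ℕ) : Bool := if j = 0 then true else w j

lemma planCost_trackingPlan (w : ℕ → Bool) (N : ℕ) :
    planCost 0 w (trackingPlan w) N = 1 := by
  have hstage (i : ℕ) : trajFrom 0 (trackingPlan w) w (i + 1) = 1 := by
    rw [trajFrom_zero_succ_of_head_eq_true w rfl]
    simp [trackingPlan]
  rw [planCost, Finset.sum_range_succ']
  simp only [hstage]
  simp [trajFrom, pmpcCost]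

def IsConsensusOptimal (K N x : ℕ) (w w' u u' : ℕ → Bool) : Prop :=
  (∀ j ≤ K, u j = u' j) ∧
    ∀ v v' : ℕ → Bool, (∀ j ≤ K, v j = v' j) →
      planCost x w u N + planCost x w' u' N ≤ planCost x w v N + planCost x w' v' N

lemma IsConsensusOptimal.head_eq_false {K N j : ℕ} {w w' u u' : ℕ → Bool}
    (hopt : IsConsensusOptimal K N 0 w w' u u') (hj : 0 < j) (hjK : j ≤ K) (hKN : K < N)
    (hw : w j ≠ w' j) : u 0 = false := by
  obtain ⟨hcons, hmin⟩ := hopt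
  by_contra hu
  rw [Bool.not_eq_false] at hu
  have hu' : u' 0 = true := hcons 0 (Nat.zero_le K) ▸ hu
  have hinf : planCost 0 w u N + planCost 0 w' u' N = ⊤ := by
    rcases trajFrom_zero_eq_two_of_ne hu hu' hj (hcons j hjK) hw with h | h <;>
      simp [planCost_eq_top_of_trajFrom_eq_two (show j + 1 ≤ N by omega) h]
  have hfin : planCost 0 w (fun _ => false) N + planCost 0 w' (fun _ => false) N ≠ ⊤ :=
    ENNReal.add_ne_top.2
      ⟨planCost_zero_const_false_ne_top w N, planCost_zero_const_false_ne_top w' N⟩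
  exact hfin (top_le_iff.1 (hinf ▸ hmin _ _ fun _ _ => rfl))

lemma closedLoop_eq_zero {π : ℕ → ℕ → Bool} (w : ℕ → Bool) (hπ : ∀ t, π t 0 = false)
    (t : ℕ) : closedLoop π w t = 0 := by
  induction t with
  | zero => rfl
  | succ t ih => simp [closedLoop, ih, hπ, pmpcDyn]

lemma w₁_eq_w₂_of_lt {Nstar j : ℕ} (h : j < Nstar) : w₁ Nstar j = w₂ Nstar j := by
  simp [w₁, w₂, h]

lemma w₁_ne_w₂ {Nstar j : ℕ} (h : Nstar ≤ j) : w₁ Nstar j ≠ w₂ Nstar j := by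
  simp only [w₁, w₂, if_neg (Nat.not_lt.2 h), ne_eq, decide_eq_decide]
  omega

theorem stmt13 (Nstar K N : ℕ) (hNstar : 2 ≤ Nstar) (hKN : K < N) :
    -- (a) with consensus horizon K ≥ N* (measured from the current time), any
    -- receding-horizon execution of K-consensus-optimal plans stays at state 0 forever,
    -- under either true disturbance w₁ or w₂
    (Nstar ≤ K →
      ∀ π : ℕ → ℕ → Bool,
        (∀ t x : ℕ, ∃ u₁ u₂ : ℕ → Bool,
          (∀ j ≤ K, u₁ j = u₂ j) ∧
          (∀ v₁ v₂ : ℕ → Bool, (∀ j ≤ K, v₁ j = v₂ j) →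
            planCost x (fun j => w₁ Nstar (t + j)) u₁ N +
                planCost x (fun j => w₂ Nstar (t + j)) u₂ N ≤
              planCost x (fun j => w₁ Nstar (t + j)) v₁ N +
                planCost x (fun j => w₂ Nstar (t + j)) v₂ N) ∧
          π t x = u₁ 0) →
        ∀ t : ℕ, closedLoop π (w₁ Nstar) t = 0 ∧ closedLoop π (w₂ Nstar) t = 0) ∧
    -- (b) with consensus horizon K < N*, there is a plan, optimal for each particle
    -- individually, whose first action is 1; and executing a first action of 1 drives
    -- the closed-loop state to 2 under at least one of the two true disturbances
    (K < Nstar →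
      (∃ u₁ u₂ : ℕ → Bool,
        (∀ j ≤ K, u₁ j = u₂ j) ∧ u₁ 0 = true ∧
        (∀ v : ℕ → Bool, planCost 0 (w₁ Nstar) u₁ N ≤ planCost 0 (w₁ Nstar) v N) ∧
        (∀ v : ℕ → Bool, planCost 0 (w₂ Nstar) u₂ N ≤ planCost 0 (w₂ Nstar) v N)) ∧
      (∀ u : ℕ → Bool, u 0 = true →
        (∃ j, trajFrom 0 u (w₁ Nstar) j = 2) ∨ (∃ j, trajFrom 0 u (w₂ Nstar) j = 2))) := by
  refine ⟨fun hK π hπ t => ?_, fun hKlt => ⟨?_, fun u hu => ?_⟩⟩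
  · have hhead (t : ℕ) : π t 0 = false := by
      obtain ⟨u₁, u₂, hcons, hmin, hπt⟩ := hπ t 0
      rw [hπt]
      -- the first step at which the shifted disturbances differ lies within the consensus
      exact IsConsensusOptimal.head_eq_false (j := max (Nstar - t) 1) ⟨hcons, hmin⟩
        (by omega) (by omega) hKN (w₁_ne_w₂ (by omega))
    exact ⟨closedLoop_eq_zero _ hhead t, closedLoop_eq_zero _ hhead t⟩
  · refine ⟨trackingPlan (w₁ Nstar), trackingPlan (w₂ Nstar), fun j hj => ?_, rfl,
      fun v => ?_, fun v => ?_⟩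
    · simp only [trackingPlan, w₁_eq_w₂_of_lt (show j < Nstar by omega)]
    · exact planCost_trackingPlan _ N ▸ one_le_planCost_zero _ v N
    · exact planCost_trackingPlan _ N ▸ one_le_planCost_zero _ v N
  · rcases trajFrom_zero_eq_two_of_ne hu hu (by omega : 0 < Nstar) rfl (w₁_ne_w₂ le_rfl)
      with h | h
    exacts [Or.inl ⟨_, h⟩, Or.inr ⟨_, h⟩]
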